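/- Suppose G is local with respect to a neighborhood map N : ι → Set ι, i.e. G_i(x) = G_i(y) whenever the states x and y agree on all components in N(i), and suppose N(i) ∩ F = ∅ for every i ∈ C. Then the LTS2 step with M = 1 coincides, in every component i ∈ ι, with one global SSPRK2 step with step Δt applied to the full system: x^new = (1/2)x⁰ + (1/2)y₁ + (1/2)Δt·G(y₁), where y₁ = x⁰ + Δt·G(x⁰). -/

import Mathlib

open scoped Classical

/-- The substepping recursion of one LTS2 step. Starting from the state `x0`, the
first-stage vector `x1`, coarse step `Δt` and substep count `M`, it returns the triple
`(a^k, P^k, Q^k)`: the fine solution after `k` substeps (meaningful on `F`), and the two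
accumulated interface correction terms (meaningful on `I₁ ∪ I₂`). -/
noncomputable def lts2Sub {ι : Type*} (F I₁ : Set ι)
    (G : (ι → ℝ) → ι → ℝ) (Δt : ℝ) (M : ℕ) (x0 x1 : ι → ℝ) :
    ℕ → ((ι → ℝ) × (ι → ℝ) × (ι → ℝ))
  | 0 => (x0, fun _ => 0, fun _ => 0)
  | k + 1 =>
    let s := lts2Sub F I₁ G Δt M x0 x1 k
    let a := s.1
    let P := s.2.1
    let Q := s.2.2
    -- v^k: a^k on F, the α-interpolant on I₁, x⁰ on I₂ ∪ C
    let v : ι → ℝ := fun i =>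
      if i ∈ F then a i
      else if i ∈ I₁ then (1 - (k : ℝ) / M) * x0 i + ((k : ℝ) / M) * x1 i
      else x0 i
    -- b^k = v^k + (Δt/M)·G(v^k) (used on F)
    let b : ι → ℝ := fun i => v i + (Δt / M) * G v i
    -- w^k: b^k on F, the β-interpolant on I₁, x¹ on I₂ ∪ C
    let w : ι → ℝ := fun i =>
      if i ∈ F then b i
      else if i ∈ I₁ then
        (1 - ((k : ℝ) + 1) / M) * x0 i + (((k : ℝ) + 1) / M) * x1 i
      else x1 i
    (fun i => (1 / 2) * a i + (1 / 2) * b i + (1 / 2) * (Δt / M) * G w i,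
     fun i => P i + G v i,
     fun i => Q i + G w i)

/-- One step of the second-order local time-stepping scheme LTS2, with fine region `F`,
interface regions `I₁`, `I₂`, coarse region `C`, right-hand side `G`, coarse step `Δt`
and `M` fine substeps per coarse step. -/
noncomputable def lts2Step {ι : Type*} (F I₁ I₂ C : Set ι)
    (G : (ι → ℝ) → ι → ℝ) (Δt : ℝ) (M : ℕ) (x0 : ι → ℝ) : ι → ℝ :=
  -- x¹ = x⁰ + Δt·G(x⁰) on I₁ ∪ I₂ ∪ C, and x¹ = x⁰ on F
  let x1 : ι → ℝ := fun i => if i ∈ F then x0 i else x0 i + Δt * G x0 i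
  -- x² = (1/2)x⁰ + (1/2)x¹ + (1/2)Δt·G(x¹) (used on C)
  let x2 : ι → ℝ := fun i =>
    (1 / 2) * x0 i + (1 / 2) * x1 i + (1 / 2) * Δt * G x1 i
  let s := lts2Sub F I₁ G Δt M x0 x1 M
  fun i =>
    if i ∈ F then s.1 i
    else if i ∈ C then x2 i
    else x0 i + (Δt / M) * ((1 / 2) * s.2.1 i + (1 / 2) * s.2.2 i)

/-! With a single substep the interface interpolants degenerate to `x⁰` and `x¹`, so the
substepping recursion takes one forward Euler predictor `y₁` of the whole system and averages
it as SSPRK2 does: on `F` this is the SSPRK2 update itself, and on `I₁ ∪ I₂` the accumulated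
terms are `P¹ = G(x⁰)`, `Q¹ = G(y₁)`. On `C` the stage vector `x¹` differs from `y₁` only on
`F`, which `G` cannot see there by locality, since coarse cells have no fine neighbours. -/

section LTS2

variable {ι : Type*}

noncomputable def eulerStep (G : (ι → ℝ) → ι → ℝ) (Δt : ℝ) (x : ι → ℝ) : ι → ℝ :=
  fun i => x i + Δt * G x i

noncomputable def ssprk2Step (G : (ι → ℝ) → ι → ℝ) (Δt : ℝ) (x : ι → ℝ) : ι → ℝ :=
  fun i => (1 / 2) * x i + (1 / 2) * eulerStep G Δt x i + (1 / 2) * Δt * G (eulerStep G Δt x) i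

theorem apply_piecewise_eq_of_inter_eq_empty {G : (ι → ℝ) → ι → ℝ} {N : ι → Set ι}
    (hlocal : ∀ (i : ι) (x y : ι → ℝ), (∀ j ∈ N i, x j = y j) → G x i = G y i)
    {F : Set ι} {i : ι} (hNi : N i ∩ F = ∅) (x y : ι → ℝ) :
    G (fun j => if j ∈ F then x j else y j) i = G y i :=
  hlocal i _ _ fun j hj => if_neg fun hjF => (Set.eq_empty_iff_forall_notMem.mp hNi) j ⟨hj, hjF⟩

theorem lts2Sub_one_one (F I₁ : Set ι) (G : (ι → ℝ) → ι → ℝ) (Δt : ℝ) {x0 x1 : ι → ℝ}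
    (hx1 : ∀ j ∉ F, x1 j = eulerStep G Δt x0 j) :
    lts2Sub F I₁ G Δt 1 x0 x1 1 = (ssprk2Step G Δt x0, G x0, G (eulerStep G Δt x0)) := by
  have hw : (fun j => if j ∈ F then x0 j + Δt * G x0 j else x1 j) = eulerStep G Δt x0 :=
    funext fun j => by split_ifs with hF <;> simp [eulerStep, hx1 j, hF]
  simp only [lts2Sub, Nat.cast_zero, Nat.cast_one, sub_zero, one_mul, zero_mul, add_zero, div_one,
    zero_add, sub_self, ite_self, hw]
  rfl

end LTS2

theorem lts2_M_eq_one_is_ssprk2_general {ι : Type*}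
    (F I₁ I₂ C : Set ι)
    (G : (ι → ℝ) → ι → ℝ) (Δt : ℝ)
    (N : ι → Set ι)
    (hlocal : ∀ (i : ι) (x y : ι → ℝ), (∀ j ∈ N i, x j = y j) → G x i = G y i)
    (hNC : ∀ i ∈ C, N i ∩ F = ∅)
    (x0 : ι → ℝ) :
    ∀ i : ι, lts2Step F I₁ I₂ C G Δt 1 x0 i =
      (1 / 2) * x0 i + (1 / 2) * (x0 i + Δt * G x0 i) +
        (1 / 2) * Δt * G (fun j => x0 j + Δt * G x0 j) i := by
  intro i
  change lts2Step F I₁ I₂ C G Δt 1 x0 i = ssprk2Step G Δt x0 i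
  have hsub := lts2Sub_one_one F I₁ G Δt
    (x1 := fun j => if j ∈ F then x0 j else x0 j + Δt * G x0 j) fun j hj => if_neg hj
  simp only [lts2Step, hsub]
  split_ifs with hF hC
  · rfl
  · rw [apply_piecewise_eq_of_inter_eq_empty hlocal (hNC i hC)]
    rfl
  · simp only [ssprk2Step, eulerStep, Nat.cast_one, div_one]
    ring

/-- If `G` is local with respect to a neighborhood map `N` and the coarse cells see no
fine cells (`N(i) ∩ F = ∅` for `i ∈ C`), then the LTS2 step with `M = 1` coincides, in
every component, with one global SSPRK2 step with step `Δt` applied to the full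
system. -/
theorem lts2_M_eq_one_is_ssprk2 {ι : Type*} [Fintype ι]
    (F I₁ I₂ C : Set ι)
    (hcover : ∀ i : ι, i ∈ F ∨ i ∈ I₁ ∨ i ∈ I₂ ∨ i ∈ C)
    (hFI₁ : F ∩ I₁ = ∅) (hFI₂ : F ∩ I₂ = ∅) (hFC : F ∩ C = ∅)
    (hI₁I₂ : I₁ ∩ I₂ = ∅) (hI₁C : I₁ ∩ C = ∅) (hI₂C : I₂ ∩ C = ∅)
    (G : (ι → ℝ) → ι → ℝ) (Δt : ℝ)
    (N : ι → Set ι)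
    (hlocal : ∀ (i : ι) (x y : ι → ℝ), (∀ j ∈ N i, x j = y j) → G x i = G y i)
    (hNC : ∀ i ∈ C, N i ∩ F = ∅)
    (x0 : ι → ℝ) :
    ∀ i : ι, lts2Step F I₁ I₂ C G Δt 1 x0 i =
      (1 / 2) * x0 i + (1 / 2) * (x0 i + Δt * G x0 i) +
        (1 / 2) * Δt * G (fun j => x0 j + Δt * G x0 j) i :=
  lts2_M_eq_one_is_ssprk2_general F I₁ I₂ C G Δt N hlocal hNC x0
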